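/- arXiv:1811.03117 — 5 statements merged into one kernel-verified Lean document; each statement's English description precedes it below -/
import Mathlib

section
/- Let m and n be integers with |m| ≥ 3 and |n| ≥ 3, and let G = BS(m,n). Then the cyclic subgroup H = ⟨a⟩ generated by a is a maximal amenable subgroup of G. -/
/-- A left-invariant mean on the bounded real-valued functions on `G` exists:
`G` is amenable. -/
def IsAmenable (G : Type*) [Group G] : Prop :=
  ∃ m : (G → ℝ) → ℝ,
    (∀ f₁ f₂ : G → ℝ, Bornology.IsBounded (Set.range f₁) → Bornology.IsBounded (Set.range f₂) →
      m (f₁ + f₂) = m f₁ + m f₂) ∧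
    (∀ (c : ℝ) (f : G → ℝ), Bornology.IsBounded (Set.range f) → m (c • f) = c * m f) ∧
    (∀ f : G → ℝ, Bornology.IsBounded (Set.range f) → (∀ x, 0 ≤ f x) → 0 ≤ m f) ∧
    m (fun _ => 1) = 1 ∧
    (∀ (g : G) (f : G → ℝ), Bornology.IsBounded (Set.range f) →
      m (fun x => f (g * x)) = m f)

/-- `H` is a maximal amenable subgroup of `G`. -/
def MaximalAmenable {G : Type*} [Group G] (H : Subgroup G) : Prop :=
  IsAmenable H ∧ ∀ K : Subgroup G, IsAmenable K → H ≤ K → K = H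

/-- The defining relator set of the Baumslag–Solitar group `BS(m, n)`:
`a` is indexed by `false`, `t` by `true`. -/
def bsRels (m n : ℤ) : Set (FreeGroup Bool) :=
  {FreeGroup.of true * FreeGroup.of false ^ m * (FreeGroup.of true)⁻¹ * (FreeGroup.of false ^ n)⁻¹}

/-- The Baumslag–Solitar group `BS(m, n) = ⟨a, t ∣ t a^m t⁻¹ = a^n⟩`. -/
abbrev BS (m n : ℤ) := PresentedGroup (bsRels m n)

/-- The generator `a` of `BS(m, n)`. -/
def BS.a (m n : ℤ) : BS m n := PresentedGroup.of false

/-- The generator `t` of `BS(m, n)`. -/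
def BS.t (m n : ℤ) : BS m n := PresentedGroup.of true

/-!
`⟨a⟩ ≅ ℤ` is amenable: averaging along `1, a, …, a ^ N` and taking the limit along a free
ultrafilter gives an invariant mean, since translating by `a` changes the `N`-th average by
`O(1 / N)`.

Maximality is a ping-pong argument in Britton normal form. View `BS(m, n)` as the HNN extension of
`ℤ = ⟨x⟩` along `mℤ ≅ nℤ`, and let `K ⊇ ⟨a⟩` contain some `g ∉ ⟨a⟩`. Then `g` has a reduced word
`γ t^u …` with at least one stable letter. For `i = 0, 1, 2`, the element `a^i (g a g⁻¹) a^{-i}`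
of `K` maps everything outside the cone `Cᵢ` (elements whose reduced words start with `xⁱγ t^u`, up
to the amalgamated subgroup) into `Cᵢ`, because appending such an element to the reduced word of
`a^i (g a g⁻¹) a^{-i}` creates no pinch. As `|m|, |n| ≥ 3`, the cones are pairwise disjoint. An
invariant mean on `K` would give each `Cᵢ`, seen from an orbit, mass at least `1/2`, which is
impossible for three disjoint sets.
-/

open Set Filter Topology Bornology Function

section InvariantMean

variable {G : Type*} [Group G]

lemma isBounded_range_iff_exists_abs_le {α : Type*} (f : α → ℝ) :
    IsBounded (range f) ↔ ∃ C, ∀ x, |f x| ≤ C := by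
  simp only [isBounded_iff_forall_norm_le, forall_mem_range, Real.norm_eq_abs]

lemma Bornology.IsBounded.range_comp_mul_left {f : G → ℝ} (hf : IsBounded (range f)) (g : G) :
    IsBounded (range fun x => f (g * x)) :=
  hf.subset (range_comp_subset_range (g * ·) f)

def invariantSubgroup (m : (G → ℝ) → ℝ) : Subgroup G where
  carrier := {g | ∀ f : G → ℝ, IsBounded (range f) → m (fun x => f (g * x)) = m f}
  one_mem' f _ := by simp only [one_mul]
  mul_mem' {g h} hg hh f hf := by
    simpa only [mul_assoc] using (hh _ (hf.range_comp_mul_left g)).trans (hg f hf)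
  inv_mem' {g} hg f hf := by
    simpa only [inv_mul_cancel_left] using (hg _ (hf.range_comp_mul_left g⁻¹)).symm

structure InvariantFinAddProb (G : Type*) [Group G] where
  toFun : Set G → ℝ
  nonneg : ∀ A, 0 ≤ toFun A
  univ_eq_one : toFun univ = 1
  union_eq : ∀ A B, Disjoint A B → toFun (A ∪ B) = toFun A + toFun B
  preimage_mul_left : ∀ g A, toFun ((g * ·) ⁻¹' A) = toFun A

namespace InvariantFinAddProb

variable (ν : InvariantFinAddProb G)

lemma mono {A B : Set G} (h : A ⊆ B) : ν.toFun A ≤ ν.toFun B := by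
  have := ν.union_eq A (B \ A) disjoint_sdiff_right
  rw [union_sdiff_cancel h] at this
  linarith [ν.nonneg (B \ A)]

lemma add_compl (A : Set G) : ν.toFun A + ν.toFun Aᶜ = 1 := by
  rw [← ν.union_eq A Aᶜ disjoint_compl_right, union_compl_self, ν.univ_eq_one]

lemma biUnion_eq {ι : Type*} {A : ι → Set G} (hA : Pairwise (Disjoint on A)) (s : Finset ι) :
    ν.toFun (⋃ i ∈ s, A i) = ∑ i ∈ s, ν.toFun (A i) := by
  classical
  induction s using Finset.induction_on with
  | empty => simpa using ν.union_eq ∅ ∅ (disjoint_empty _)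
  | insert i s hi ih =>
    have hdisj : Disjoint (A i) (⋃ j ∈ s, A j) :=
      disjoint_iUnion₂_right.2 fun j hj => hA (ne_of_mem_of_not_mem hj hi).symm
    rw [Finset.set_biUnion_insert, ν.union_eq _ _ hdisj, Finset.sum_insert hi, ih]

lemma one_le_two_mul_of_mul_mem {A : Set G} {g : G} (hg : ∀ x ∉ A, g * x ∈ A) :
    1 ≤ 2 * ν.toFun A := by
  have h : ν.toFun Aᶜ ≤ ν.toFun ((g * ·) ⁻¹' A) := ν.mono fun x hx => hg x hx
  rw [ν.preimage_mul_left] at h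
  linarith [ν.add_compl A]

end InvariantFinAddProb

lemma isBounded_range_indicator_one {α : Type*} (A : Set α) :
    IsBounded (range (A.indicator 1 : α → ℝ)) :=
  (isBounded_range_iff_exists_abs_le _).2
    ⟨1, fun x => by by_cases hx : x ∈ A <;> simp [hx]⟩

lemma IsAmenable.nonempty_invariantFinAddProb (hG : IsAmenable G) :
    Nonempty (InvariantFinAddProb G) := by
  obtain ⟨m, hadd, -, hpos, hone, hinv⟩ := hG
  exact ⟨{
    toFun := fun A => m (A.indicator 1)
    nonneg := fun A =>
      hpos _ (isBounded_range_indicator_one A) (indicator_nonneg fun _ _ => zero_le_one)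
    univ_eq_one := by rw [indicator_univ]; exact hone
    union_eq := fun A B hAB => by
      rw [indicator_union_of_disjoint hAB]
      exact hadd _ _ (isBounded_range_indicator_one A) (isBounded_range_indicator_one B)
    preimage_mul_left := fun g A => hinv g _ (isBounded_range_indicator_one A) }⟩

theorem IsAmenable.card_le_two_of_pingpong (hG : IsAmenable G) {X : Type*} [MulAction G X]
    [Nonempty X] {ι : Type*} [Fintype ι] {C : ι → Set X} (hC : Pairwise (Disjoint on C))
    (g : ι → G) (hg : ∀ i, ∀ x ∉ C i, g i • x ∈ C i) : Fintype.card ι ≤ 2 := by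
  obtain ⟨ν⟩ := hG.nonempty_invariantFinAddProb
  obtain ⟨x₀⟩ := ‹Nonempty X›
  have hsum : ∑ i, ν.toFun ((· • x₀) ⁻¹' C i) ≤ 1 := by
    rw [← ν.biUnion_eq fun i j hij => (hC hij).preimage _]
    exact (ν.mono (subset_univ _)).trans ν.univ_eq_one.le
  have : (Fintype.card ι : ℝ) ≤ 2 := calc
    (Fintype.card ι : ℝ) = ∑ _i : ι, (1 : ℝ) := by simp
    _ ≤ ∑ i, 2 * ν.toFun ((· • x₀) ⁻¹' C i) := Finset.sum_le_sum fun i _ =>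
      ν.one_le_two_mul_of_mul_mem fun γ hγ => by simpa [mul_smul] using hg i _ hγ
    _ = 2 * ∑ i, ν.toFun ((· • x₀) ⁻¹' C i) := (Finset.mul_sum ..).symm
    _ ≤ 2 := by linarith
  exact_mod_cast this

end InvariantMean

section Cesaro

variable {G : Type*} [Group G] (α : G)

noncomputable def cesaroAverage (f : G → ℝ) (N : ℕ) : ℝ :=
  (∑ i ∈ Finset.range (N + 1), f (α ^ i)) / (N + 1)

noncomputable def cesaroMean (f : G → ℝ) : ℝ :=
  limUnder (hyperfilter ℕ : Filter ℕ) (cesaroAverage α f)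

variable {α}

lemma cesaroAverage_add (f₁ f₂ : G → ℝ) :
    cesaroAverage α (f₁ + f₂) = cesaroAverage α f₁ + cesaroAverage α f₂ := by
  ext N
  simp only [cesaroAverage, Pi.add_apply, Finset.sum_add_distrib, add_div]

lemma cesaroAverage_smul (c : ℝ) (f : G → ℝ) :
    cesaroAverage α (c • f) = c • cesaroAverage α f := by
  ext N
  simp only [cesaroAverage, Pi.smul_apply, smul_eq_mul, ← Finset.mul_sum, mul_div_assoc]

lemma cesaroAverage_one : cesaroAverage α (fun _ => 1) = fun _ => 1 := by
  ext N
  simp only [cesaroAverage, Finset.sum_const, Finset.card_range, nsmul_eq_mul, mul_one]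
  push_cast
  exact div_self (by positivity)

lemma abs_cesaroAverage_le {f : G → ℝ} {C : ℝ} (hC : ∀ x, |f x| ≤ C) (N : ℕ) :
    |cesaroAverage α f N| ≤ C := by
  have hN : (0 : ℝ) < N + 1 := by positivity
  rw [cesaroAverage, abs_div, abs_of_pos hN, div_le_iff₀ hN]
  calc |∑ i ∈ Finset.range (N + 1), f (α ^ i)|
      ≤ ∑ i ∈ Finset.range (N + 1), |f (α ^ i)| := Finset.abs_sum_le_sum_abs _ _
    _ ≤ ∑ _i ∈ Finset.range (N + 1), C := Finset.sum_le_sum fun i _ => hC _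
    _ = C * (N + 1) := by simp [mul_comm]

variable (α) in
lemma tendsto_cesaroMean {f : G → ℝ} (hf : IsBounded (range f)) :
    Tendsto (cesaroAverage α f) (hyperfilter ℕ : Filter ℕ) (𝓝 (cesaroMean α f)) := by
  obtain ⟨C, hC⟩ := (isBounded_range_iff_exists_abs_le f).1 hf
  have hIcc : Icc (-C) C ∈ Ultrafilter.map (cesaroAverage α f) (hyperfilter ℕ) :=
    Ultrafilter.mem_map.2 (univ_mem' fun N => abs_le.1 (abs_cesaroAverage_le hC N))
  obtain ⟨L, -, hL⟩ := isCompact_Icc.ultrafilter_le_nhds' _ hIcc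
  have hL : Tendsto (cesaroAverage α f) (hyperfilter ℕ : Filter ℕ) (𝓝 L) := hL
  rwa [cesaroMean, hL.limUnder_eq]

lemma cesaroAverage_mul_left_sub (f : G → ℝ) (N : ℕ) :
    cesaroAverage α (fun x => f (α * x)) N - cesaroAverage α f N
      = (f (α ^ (N + 1)) - f (α ^ 0)) / (N + 1) := by
  simp only [cesaroAverage, ← sub_div, ← Finset.sum_sub_distrib, ← pow_succ',
    Finset.sum_range_sub (fun i => f (α ^ i))]

lemma cesaroMean_comp_mul_left_self {f : G → ℝ} (hf : IsBounded (range f)) :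
    cesaroMean α (fun x => f (α * x)) = cesaroMean α f := by
  obtain ⟨C, hC⟩ := (isBounded_range_iff_exists_abs_le f).1 hf
  have hdiff : Tendsto (fun N : ℕ => (f (α ^ (N + 1)) - f (α ^ 0)) / (N + 1)) atTop (𝓝 0) := by
    have h := tendsto_one_div_add_atTop_nhds_zero_nat.const_mul (2 * C)
    rw [mul_zero] at h
    refine squeeze_zero_norm (fun N => ?_) h
    rw [Real.norm_eq_abs, abs_div, abs_of_pos (by positivity : (0 : ℝ) < N + 1), mul_one_div]
    gcongr
    linarith [abs_sub (f (α ^ (N + 1))) (f (α ^ 0)), hC (α ^ (N + 1)), hC (α ^ 0)]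
  have h := (tendsto_cesaroMean α hf).add
    (hdiff.mono_left (hyperfilter_le_cofinite.trans Nat.cofinite_eq_atTop.le))
  simp only [← cesaroAverage_mul_left_sub, add_sub_cancel, add_zero] at h
  exact h.limUnder_eq

theorem isAmenable_of_isCyclic [IsCyclic G] : IsAmenable G := by
  obtain ⟨α, hα⟩ := IsCyclic.exists_generator (α := G)
  have hinv (g : G) : g ∈ invariantSubgroup (cesaroMean α) :=
    Subgroup.zpowers_le (H := invariantSubgroup _).2
      (fun _ hf => cesaroMean_comp_mul_left_self hf) (hα g)
  refine ⟨cesaroMean α, fun f₁ f₂ h₁ h₂ => ?_, fun c f hf => ?_, fun f hf hpos => ?_, ?_,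
    fun g => hinv g⟩
  · rw [cesaroMean, cesaroAverage_add]
    exact ((tendsto_cesaroMean α h₁).add (tendsto_cesaroMean α h₂)).limUnder_eq
  · rw [cesaroMean, cesaroAverage_smul]
    exact ((tendsto_cesaroMean α hf).const_smul c).limUnder_eq
  · refine ge_of_tendsto' (tendsto_cesaroMean α hf) fun N => ?_
    exact div_nonneg (Finset.sum_nonneg fun i _ => hpos _) (by positivity)
  · rw [cesaroMean, cesaroAverage_one]
    exact tendsto_const_nhds.limUnder_eq

end Cesaro

namespace HNNExtension

open NormalWord

variable {G : Type*} [Group G] {A B : Subgroup G} (φ : A ≃* B)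

lemma exists_reducedWord_prod_eq (x : HNNExtension G A B φ) :
    ∃ w : ReducedWord G A B, w.prod φ = x := by
  obtain ⟨d⟩ := TransversalPair.nonempty G A B
  exact ⟨(equiv φ d x).toReducedWord, (equiv φ d).symm_apply_apply x⟩

noncomputable def lettersProd (L : List (ℤˣ × G)) : HNNExtension G A B φ :=
  (L.map fun p => t ^ (p.1 : ℤ) * of p.2).prod

lemma NormalWord.ReducedWord.prod_eq_of_mul_lettersProd (w : ReducedWord G A B) :
    w.prod φ = of w.head * lettersProd φ w.toList := rfl

@[simp]
lemma lettersProd_nil : lettersProd φ [] = 1 := rfl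

@[simp]
lemma lettersProd_cons (p : ℤˣ × G) (L : List (ℤˣ × G)) :
    lettersProd φ (p :: L) = t ^ (p.1 : ℤ) * of p.2 * lettersProd φ L := by
  simp [lettersProd]

@[simp]
lemma lettersProd_append (L₁ L₂ : List (ℤˣ × G)) :
    lettersProd φ (L₁ ++ L₂) = lettersProd φ L₁ * lettersProd φ L₂ := by
  simp [lettersProd]

def cone (u : ℤˣ) (c : G) : Set (HNNExtension G A B φ) :=
  {x | ∃ w : ReducedWord G A B, w.prod φ = x ∧ w.toList.head?.map Prod.fst = some u ∧
    c⁻¹ * w.head ∈ toSubgroup A B (-u)}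

variable {φ}

lemma mem_cone_iff {u : ℤˣ} {c : G} {w : ReducedWord G A B} :
    w.prod φ ∈ cone φ u c ↔
      w.toList.head?.map Prod.fst = some u ∧ c⁻¹ * w.head ∈ toSubgroup A B (-u) := by
  refine ⟨fun ⟨w₀, hw₀, hu, hc⟩ => ?_, fun h => ⟨w, rfl, h⟩⟩
  obtain ⟨hfst, hhead⟩ := ReducedWord.map_fst_eq_and_of_prod_eq φ hw₀
  refine ⟨by rw [← List.head?_map, ← hfst, List.head?_map, hu], ?_⟩
  simpa only [mul_assoc, mul_inv_cancel_left] using mul_mem hc (hhead u hu)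

lemma disjoint_cone {u : ℤˣ} {c c' : G} (h : c'⁻¹ * c ∉ toSubgroup A B (-u)) :
    Disjoint (cone φ u c) (cone φ u c') := by
  refine Set.disjoint_left.2 fun x ⟨w, hw, hu, hc⟩ hx' => h ?_
  obtain ⟨-, hc'⟩ := mem_cone_iff.1 (hw ▸ hx')
  simpa only [mul_inv_rev, inv_inv, mul_assoc, mul_inv_cancel_left] using
    mul_mem hc' (inv_mem hc)

variable (φ) (x : G)

/-- Head and letters of a reduced word for `of γ * P * of x * (of γ * P)⁻¹ * of β`, where `P` is
the product of the letters `L`: the letters of `L`, with the last one absorbing `x`, followed by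
their inverses in reverse order. -/
def conjWord : G → List (ℤˣ × G) → G → G × List (ℤˣ × G)
  | γ, [], β => (γ * x * γ⁻¹ * β, [])
  | γ, (u, γ') :: L, β =>
    (γ, (u, (conjWord γ' L 1).1) :: ((conjWord γ' L 1).2 ++ [(-u, γ⁻¹ * β)]))

@[simp]
lemma conjWord_nil (γ β : G) : conjWord x γ [] β = (γ * x * γ⁻¹ * β, []) := rfl

@[simp]
lemma conjWord_cons (γ γ' β : G) (u : ℤˣ) (L : List (ℤˣ × G)) :
    conjWord x γ ((u, γ') :: L) β =
      (γ, (u, (conjWord x γ' L 1).1) :: ((conjWord x γ' L 1).2 ++ [(-u, γ⁻¹ * β)])) := rfl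

lemma getLast?_conjWord_cons (γ γ' β : G) (u : ℤˣ) (L : List (ℤˣ × G)) :
    (conjWord x γ ((u, γ') :: L) β).2.getLast? = some (-u, γ⁻¹ * β) := by
  rw [conjWord_cons, ← List.cons_append, List.getLast?_concat]

lemma conjWord_prod (L : List (ℤˣ × G)) (γ β : G) :
    (of (conjWord x γ L β).1 : HNNExtension G A B φ) * lettersProd φ (conjWord x γ L β).2 =
      of γ * lettersProd φ L * of x * (of γ * lettersProd φ L)⁻¹ * of β := by
  induction L generalizing γ β with
  | nil => simp
  | cons p L ih =>
    obtain ⟨u, γ'⟩ := p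
    have hL := ih γ' 1
    rw [map_one, mul_one, ← eq_inv_mul_iff_mul_eq] at hL
    simp only [conjWord_cons, lettersProd_cons, lettersProd_append, lettersProd_nil, hL,
      Units.val_neg, zpow_neg, map_mul, map_inv]
    group

variable {x}

lemma isChain_conjWord (hx : ∀ (u : ℤˣ) (γ : G), γ * x * γ⁻¹ ∉ toSubgroup A B u)
    {L : List (ℤˣ × G)} (hL : L.IsChain fun a b => a.2 ∈ toSubgroup A B a.1 → a.1 = b.1)
    (γ β : G) :
    (conjWord x γ L β).2.IsChain fun a b => a.2 ∈ toSubgroup A B a.1 → a.1 = b.1 := by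
  induction L generalizing γ β with
  | nil => exact List.isChain_nil
  | cons p L ih =>
    obtain ⟨u, γ'⟩ := p
    rw [conjWord_cons, List.isChain_cons, List.isChain_append]
    refine ⟨?_, ih hL.tail γ' 1, List.isChain_singleton _, ?_⟩
    · rintro y hy hmem
      rcases L with _ | ⟨⟨v, δ⟩, L⟩
      · exact absurd (by simpa using hmem) (hx u γ')
      · obtain rfl : y = (v, (conjWord x δ L 1).1) := by simpa using hy.symm
        exact (List.isChain_cons_cons.1 hL).1 hmem
    · rintro z hz y hy hmem
      rcases L with _ | ⟨⟨v, δ⟩, L⟩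
      · simp at hz
      · rw [getLast?_conjWord_cons, Option.mem_some_iff] at hz
        obtain rfl := hz
        obtain rfl : y = (-u, γ⁻¹ * β) := by simpa using hy.symm
        have hγ' : γ' ∈ toSubgroup A B (-v) := by simpa using hmem
        show -v = -u
        rcases eq_or_ne v u with rfl | hvu
        · rfl
        · rw [Int.units_ne_iff_eq_neg.1 hvu, neg_neg] at hγ'
          exact absurd ((List.isChain_cons_cons.1 hL).1 hγ').symm hvu

variable {φ}

theorem conj_mul_mem_cone (hx : ∀ (u : ℤˣ) (γ : G), γ * x * γ⁻¹ ∉ toSubgroup A B u)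
    (w : ReducedWord G A B) {u : ℤˣ} (hu : w.toList.head?.map Prod.fst = some u) (g : G)
    {y : HNNExtension G A B φ} (hy : y ∉ cone φ u (g * w.head)) :
    of g * w.prod φ * of x * (w.prod φ)⁻¹ * of g⁻¹ * y ∈ cone φ u (g * w.head) := by
  obtain ⟨⟨u', γ₁⟩, L, hw⟩ : ∃ p L, w.toList = p :: L := by
    rcases h : w.toList with _ | ⟨p, L⟩
    · simp [h] at hu
    · exact ⟨p, L, rfl⟩
  obtain rfl : u' = u := by simpa [hw] using hu
  obtain ⟨v, rfl⟩ := exists_reducedWord_prod_eq φ y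
  have hchain : ((conjWord x w.head w.toList (g⁻¹ * v.head)).2 ++ v.toList).IsChain
      fun a b => a.2 ∈ toSubgroup A B a.1 → a.1 = b.1 := by
    rw [List.isChain_append]
    refine ⟨isChain_conjWord hx w.chain _ _, v.chain, ?_⟩
    -- a pinch at the junction would put `y` into the cone
    rintro z hz y' hy' hmem
    rw [hw, getLast?_conjWord_cons, Option.mem_some_iff] at hz
    subst hz
    show -u' = y'.1
    by_contra hne
    rw [← ne_eq, ne_comm, Int.units_ne_iff_eq_neg, neg_neg] at hne
    refine hy (mem_cone_iff.2 ⟨?_, ?_⟩)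
    · rw [Option.map_eq_some_iff]; exact ⟨y', hy', hne⟩
    · simpa [mul_assoc] using hmem
  have hprod : ReducedWord.prod φ ⟨g * w.head, _, hchain⟩ =
      of g * w.prod φ * of x * (w.prod φ)⁻¹ * of g⁻¹ * v.prod φ := by
    have hcw := conjWord_prod φ x w.toList w.head (g⁻¹ * v.head)
    have hhead : (conjWord x w.head w.toList (g⁻¹ * v.head)).1 = w.head := by rw [hw]; rfl
    rw [hhead, ← eq_inv_mul_iff_mul_eq] at hcw
    simp only [ReducedWord.prod_eq_of_mul_lettersProd, lettersProd_append, hcw, map_mul, map_inv]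
    group
  rw [← hprod, mem_cone_iff]
  simp [hw]

end HNNExtension

namespace BS

variable {m n : ℤ}

lemma t_mul_a_zpow_mul_inv_t : t m n * a m n ^ m * (t m n)⁻¹ = a m n ^ n := by
  have h := PresentedGroup.one_of_mem (rels := bsRels m n) (Set.mem_singleton _)
  simp only [map_mul, map_inv, map_zpow, mul_inv_eq_one] at h
  exact h

lemma t_mul_a_zpow_mul_mul_inv_t (k : ℤ) :
    t m n * a m n ^ (m * k) * (t m n)⁻¹ = a m n ^ (n * k) := by
  have h := map_zpow (MulAut.conj (t m n)) (a m n ^ m) k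
  rw [MulAut.conj_apply, MulAut.conj_apply, t_mul_a_zpow_mul_inv_t] at h
  rw [zpow_mul, zpow_mul, h]

variable {H : Type*} [Group H]

noncomputable def lift (x y : H) (h : y * x ^ m * y⁻¹ = x ^ n) : BS m n →* H :=
  PresentedGroup.toGroup (f := fun b => cond b y x) (by
    rintro r rfl
    simpa [mul_inv_eq_one] using h)

lemma lift_a (x y : H) (h : y * x ^ m * y⁻¹ = x ^ n) : lift x y h (a m n) = x :=
  PresentedGroup.toGroup.of _

lemma lift_t (x y : H) (h : y * x ^ m * y⁻¹ = x ^ n) : lift x y h (t m n) = y :=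
  PresentedGroup.toGroup.of _

@[ext]
lemma hom_ext {f₁ f₂ : BS m n →* H} (ha : f₁ (a m n) = f₂ (a m n))
    (ht : f₁ (t m n) = f₂ (t m n)) : f₁ = f₂ :=
  PresentedGroup.ext fun b => by cases b <;> assumption

open Multiplicative HNNExtension HNNExtension.NormalWord Subgroup

lemma mem_zpowers_ofAdd_iff {k : ℤ} {γ : Multiplicative ℤ} :
    γ ∈ zpowers (ofAdd k) ↔ k ∣ γ.toAdd := by
  simp only [mem_zpowers_iff, ← toAdd.injective.eq_iff, Int.toAdd_zpow, toAdd_ofAdd, dvd_def,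
    eq_comm (a := γ.toAdd), mul_comm k]

lemma ofAdd_notMem_toSubgroup {k : ℤ} (hk : k ≠ 0) (hkm : |k| < |m|) (hkn : |k| < |n|)
    (u : ℤˣ) : ofAdd k ∉ toSubgroup (zpowers (ofAdd m)) (zpowers (ofAdd n)) u := by
  rcases Int.units_eq_one_or u with rfl | rfl
  · rw [toSubgroup_one, mem_zpowers_ofAdd_iff, toAdd_ofAdd]
    exact fun h => (Int.le_of_dvd (abs_pos.2 hk) ((abs_dvd_abs _ _).2 h)).not_gt hkm
  · rw [toSubgroup_neg_one, mem_zpowers_ofAdd_iff, toAdd_ofAdd]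
    exact fun h => (Int.le_of_dvd (abs_pos.2 hk) ((abs_dvd_abs _ _).2 h)).not_gt hkn

section HNN

variable (hm : m ≠ 0) (hn : n ≠ 0)

/-- `x ^ (m * k) ↦ x ^ (n * k)` for `x = ofAdd 1`. -/
def zpowersOfAddEquiv : zpowers (ofAdd m) ≃* zpowers (ofAdd n) where
  toFun γ := ⟨ofAdd ((γ : Multiplicative ℤ).toAdd / m * n),
    mem_zpowers_ofAdd_iff.2 (dvd_mul_left _ _)⟩
  invFun γ := ⟨ofAdd ((γ : Multiplicative ℤ).toAdd / n * m),
    mem_zpowers_ofAdd_iff.2 (dvd_mul_left _ _)⟩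
  left_inv γ := by
    obtain ⟨k, hk⟩ := mem_zpowers_ofAdd_iff.1 γ.2
    ext
    simp [hk, hm, hn, mul_comm k]
  right_inv γ := by
    obtain ⟨k, hk⟩ := mem_zpowers_ofAdd_iff.1 γ.2
    ext
    simp [hk, hm, hn, mul_comm k]
  map_mul' γ δ := by
    obtain ⟨k, hk⟩ := mem_zpowers_ofAdd_iff.1 γ.2
    obtain ⟨l, hl⟩ := mem_zpowers_ofAdd_iff.1 δ.2
    ext
    simp [hk, hl, hm, ← mul_add, add_mul]

lemma zpowersOfAddEquiv_apply (γ : zpowers (ofAdd m)) :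
    (zpowersOfAddEquiv hm hn γ : Multiplicative ℤ) = ofAdd ((γ : Multiplicative ℤ).toAdd / m * n) :=
  rfl

/-- `BS(m, n)` as the HNN extension of `ℤ` identifying `mℤ` with `nℤ`. -/
abbrev HNN := HNNExtension (Multiplicative ℤ) (zpowers (ofAdd m)) (zpowers (ofAdd n))
  (zpowersOfAddEquiv hm hn)

noncomputable def toHNN : BS m n →* HNN hm hn :=
  lift (of (ofAdd 1)) HNNExtension.t (by
    have h := equiv_eq_conj (φ := zpowersOfAddEquiv hm hn) ⟨ofAdd m, mem_zpowers _⟩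
    simp only [zpowersOfAddEquiv_apply, toAdd_ofAdd, Int.ediv_self hm, one_mul] at h
    simp only [← map_zpow, ← Int.ofAdd_mul, one_mul, h])

noncomputable def ofHNN : HNN hm hn →* BS m n :=
  HNNExtension.lift (zpowersHom _ (a m n)) (t m n) (by
    rintro ⟨γ, hγ⟩
    obtain ⟨k, hk⟩ := mem_zpowers_ofAdd_iff.1 hγ
    simp only [zpowersHom_apply, zpowersOfAddEquiv_apply, hk, Int.mul_ediv_cancel_left _ hm,
      ← mul_inv_eq_iff_eq_mul, t_mul_a_zpow_mul_mul_inv_t, toAdd_ofAdd, mul_comm k])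

lemma toHNN_a : toHNN hm hn (a m n) = of (ofAdd 1) := lift_a ..

lemma toHNN_a_zpow (k : ℤ) : toHNN hm hn (a m n ^ k) = of (ofAdd k) := by
  rw [map_zpow, toHNN_a, ← map_zpow, ← Int.ofAdd_mul, one_mul]

lemma ofHNN_comp_toHNN : (ofHNN hm hn).comp (toHNN hm hn) = MonoidHom.id (BS m n) := by
  ext
  · simp [toHNN_a, ofHNN]
  · simp [toHNN, ofHNN, lift_t]

lemma mem_zpowers_a_of_toHNN_mem_range {g : BS m n}
    (hg : toHNN hm hn g ∈ (of : Multiplicative ℤ →* HNN hm hn).range) :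
    g ∈ zpowers (a m n) := by
  obtain ⟨γ, hγ⟩ := hg
  refine ⟨γ.toAdd, ?_⟩
  calc a m n ^ γ.toAdd = ofHNN hm hn (of γ) := by simp [ofHNN]
    _ = g := by rw [hγ, ← MonoidHom.comp_apply, ofHNN_comp_toHNN, MonoidHom.id_apply]

lemma exists_head?_map_fst_eq_some {g : BS m n} (hg : g ∉ zpowers (a m n))
    {w : ReducedWord (Multiplicative ℤ) (zpowers (ofAdd m)) (zpowers (ofAdd n))}
    (hw : w.prod (zpowersOfAddEquiv hm hn) = toHNN hm hn g) :
    ∃ u, w.toList.head?.map Prod.fst = some u := by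
  rcases h : w.toList with _ | ⟨p, L⟩
  · refine (hg (mem_zpowers_a_of_toHNN_mem_range hm hn ⟨w.head, ?_⟩)).elim
    rw [← hw, ReducedWord.prod_eq_of_mul_lettersProd, h, lettersProd_nil, mul_one]
  · exact ⟨p.1, rfl⟩

lemma disjoint_cone_ofAdd_mul {u : ℤˣ} {i j : ℤ} (hij : i ≠ j) (him : |i - j| < |m|)
    (hin : |i - j| < |n|) (γ : Multiplicative ℤ) :
    Disjoint (cone (zpowersOfAddEquiv hm hn) u (ofAdd i * γ))
      (cone (zpowersOfAddEquiv hm hn) u (ofAdd j * γ)) := by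
  refine disjoint_cone ?_
  have hdiff : (ofAdd j * γ)⁻¹ * (ofAdd i * γ) = ofAdd (i - j) := by
    apply toAdd.injective
    simp only [toAdd_mul, toAdd_inv, toAdd_ofAdd]
    ring
  rw [hdiff]
  exact ofAdd_notMem_toSubgroup (sub_ne_zero.2 hij) him hin _

end HNN

theorem exists_pingpong (hm : 3 ≤ |m|) (hn : 3 ≤ |n|) {g : BS m n} (hg : g ∉ zpowers (a m n)) :
    ∃ C : Fin 3 → Set (BS m n), Pairwise (Disjoint on C) ∧ ∀ i : Fin 3, ∀ y ∉ C i,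
      a m n ^ (i : ℤ) * g * a m n * g⁻¹ * (a m n ^ (i : ℤ))⁻¹ * y ∈ C i := by
  have hm0 : m ≠ 0 := by rintro rfl; simp at hm
  have hn0 : n ≠ 0 := by rintro rfl; simp at hn
  obtain ⟨w, hw⟩ := exists_reducedWord_prod_eq _ (toHNN hm0 hn0 g)
  obtain ⟨u, hu⟩ := exists_head?_map_fst_eq_some hm0 hn0 hg hw
  refine ⟨fun i => toHNN hm0 hn0 ⁻¹' cone _ u (ofAdd (i : ℤ) * w.head), fun i j hij => ?_,
    fun i y hy => ?_⟩
  · have hij : (i : ℤ) ≠ j := by exact_mod_cast Fin.val_ne_of_ne hij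
    have hsmall : |(i : ℤ) - j| ≤ 2 := abs_le.2 ⟨by omega, by omega⟩
    exact (disjoint_cone_ofAdd_mul hm0 hn0 hij (by omega) (by omega) _).preimage _
  · have hx (u : ℤˣ) (γ : Multiplicative ℤ) :
        γ * ofAdd 1 * γ⁻¹ ∉ toSubgroup (zpowers (ofAdd m)) (zpowers (ofAdd n)) u := by
      rw [mul_inv_cancel_comm]
      exact ofAdd_notMem_toSubgroup one_ne_zero (by rw [abs_one]; omega)
        (by rw [abs_one]; omega) u
    simpa only [Set.mem_preimage, map_mul, map_inv, toHNN_a_zpow, toHNN_a, hw] using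
      conj_mul_mem_cone hx w hu (ofAdd (i : ℤ)) hy

end BS

theorem maximal_amenable_cyclic_in_BS (m n : ℤ) (hm : 3 ≤ |m|) (hn : 3 ≤ |n|) :
    MaximalAmenable (Subgroup.zpowers (BS.a m n)) := by
  refine ⟨isAmenable_of_isCyclic, fun K hK hle => le_antisymm (fun g hgK => ?_) hle⟩
  by_contra hg
  obtain ⟨C, hC, hping⟩ := BS.exists_pingpong hm hn hg
  have ha : BS.a m n ∈ K := hle (Subgroup.mem_zpowers _)
  have hκ (i : ℤ) : BS.a m n ^ i * g * BS.a m n * g⁻¹ * (BS.a m n ^ i)⁻¹ ∈ K :=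
    K.mul_mem (K.mul_mem (K.mul_mem (K.mul_mem (K.zpow_mem ha i) hgK) ha) (K.inv_mem hgK))
      (K.inv_mem (K.zpow_mem ha i))
  have := hK.card_le_two_of_pingpong hC (fun i => ⟨_, hκ i⟩) hping
  simp at this
end

section
/- Let G be a torsion-free group, let K be a nontrivial subgroup of G, and let H ≤ K be maximal amenable in K. Suppose that for every g ∈ G with g ∉ K, the group homomorphism from the free product K * ℤ to G which restricts to the inclusion of K and sends a generator of ℤ to g is injective. Then H is a maximal amenable subgroup of G. -/
/-- Old Mathlib `Monoid.IsTorsionFree`: no nontrivial element of finite order. -/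
def Monoid.IsTorsionFree (G : Type*) [Monoid G] : Prop :=
  ∀ g : G, g ≠ 1 → ¬IsOfFinOrder g

/-!
Since `K` is torsion-free and nontrivial, it contains a copy of `ℤ`, which is amenable (averages
over `{0, …, n}` converge along an ultrafilter to an invariant mean); so the maximal amenable
subgroup `H` is nontrivial, and we pick `h ∈ H` of infinite order. Let `L ⊇ H` be amenable. If `L`
contained some `x ∉ K`, then `K ∗ ℤ` would embed in `G` with the generator going to `x`; by the
ping-pong lemma, `h` and the generator generate a free group of rank two in `K ∗ ℤ`, so `L` would
contain a free group of rank two, which is paradoxical and hence not amenable. Thus `L ≤ K`, and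
maximality of `H` in `K` gives `L = H`.
-/

open Function Set Filter Bornology Topology Pointwise
open scoped BigOperators

section Transfer

variable {Γ Δ : Type*} [Group Γ] [Group Δ]

theorem exists_equivariant_of_injective {e : Γ →* Δ} (he : Injective e) :
    ∃ μ : Δ → Γ, ∀ γ x, μ (e γ * x) = γ * μ x := by
  let r : Δ → Δ := fun x => (Quotient.mk (QuotientGroup.rightRel e.range) x).out
  have hr : ∀ x, ∃ γ, e γ = x * (r x)⁻¹ := fun x =>
    MonoidHom.mem_range.mp <| QuotientGroup.rightRel_apply.mp (Quotient.mk_out x)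
  have hr_mul : ∀ γ x, r (e γ * x) = r x := fun γ x =>
    congrArg Quotient.out <| Quotient.sound <| QuotientGroup.rightRel_apply.mpr <| by simp
  choose μ hμ using hr
  exact ⟨μ, fun γ x => he <| by rw [hμ, hr_mul, map_mul, hμ, mul_assoc]⟩

theorem IsAmenable.of_injective (e : Γ →* Δ) (he : Injective e) (hΔ : IsAmenable Δ) :
    IsAmenable Γ := by
  obtain ⟨μ, hμ⟩ := exists_equivariant_of_injective he
  obtain ⟨m, hadd, hsmul, hpos, hone, hinv⟩ := hΔ
  have hbdd : ∀ {f : Γ → ℝ}, IsBounded (range f) → IsBounded (range (f ∘ μ)) := fun hf =>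
    hf.subset (range_comp_subset_range _ _)
  refine ⟨fun f => m (f ∘ μ), fun f₁ f₂ h₁ h₂ => hadd _ _ (hbdd h₁) (hbdd h₂),
    fun c f hf => hsmul c _ (hbdd hf), fun f hf hf₀ => hpos _ (hbdd hf) fun x => hf₀ _, hone,
    fun γ f hf => ?_⟩
  have hshift : (fun x => f (γ * x)) ∘ μ = fun y => (f ∘ μ) (e γ * y) := by
    funext y
    simp [hμ]
  simpa only [hshift] using hinv (e γ) _ (hbdd hf)

theorem IsAmenable.of_injective_of_range_le {G : Type*} [Group G] {φ : Γ →* G}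
    (hφ : Injective φ) {L : Subgroup G} (hL : IsAmenable L) (h : φ.range ≤ L) : IsAmenable Γ :=
  hL.of_injective (φ.codRestrict L fun x => h ⟨x, rfl⟩) fun _ _ hxy =>
    hφ (congrArg Subtype.val hxy)

end Transfer

theorem Ultrafilter.exists_tendsto_of_abs_le {ι : Type*} (U : Ultrafilter ι) {u : ι → ℝ} {C : ℝ}
    (hu : ∀ i, |u i| ≤ C) : ∃ a, Tendsto u U (𝓝 a) := by
  obtain ⟨a, -, ha⟩ := (isCompact_Icc (a := -C) (b := C)).ultrafilter_le_nhds (U.map u) <|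
    le_principal_iff.2 <| Ultrafilter.mem_map.2 <| univ_mem' fun i => abs_le.1 (hu i)
  exact ⟨a, ha⟩

section Averages

variable {G ι : Type*} [Group G]

def asymptoticStabilizer (l : Filter ι) (F : ι → Finset G) : Subgroup G where
  carrier := {g | ∀ f : G → ℝ, IsBounded (range f) →
    Tendsto (fun i => 𝔼 x ∈ F i, (f (g * x) - f x)) l (𝓝 0)}
  one_mem' f _ := by simpa using tendsto_const_nhds
  mul_mem' {a b} ha hb f hf := by
    have hfa : IsBounded (range fun x => f (a * x)) := hf.subset (range_comp_subset_range _ _)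
    have hsplit : ∀ i, 𝔼 x ∈ F i, (f (a * b * x) - f x) =
        𝔼 x ∈ F i, (f (a * (b * x)) - f (a * x)) + 𝔼 x ∈ F i, (f (a * x) - f x) := fun i => by
      rw [← Finset.expect_add_distrib]
      simp [mul_assoc]
    simpa only [hsplit, add_zero] using (hb _ hfa).add (ha f hf)
  inv_mem' {a} ha f hf := by
    have hfa : IsBounded (range fun x => f (a⁻¹ * x)) := hf.subset (range_comp_subset_range _ _)
    have hneg : ∀ i, 𝔼 x ∈ F i, (f (a⁻¹ * x) - f x) =
        -𝔼 x ∈ F i, (f (a⁻¹ * (a * x)) - f (a⁻¹ * x)) := fun i => by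
      rw [← Finset.expect_neg_distrib]
      simp
    simpa only [hneg, neg_zero] using (ha _ hfa).neg

theorem isAmenable_of_asymptoticStabilizer_eq_top (l : Filter ι) [l.NeBot] (F : ι → Finset G)
    (hF : ∀ i, (F i).Nonempty) (htop : asymptoticStabilizer l F = ⊤) : IsAmenable G := by
  obtain ⟨U, hU⟩ := Ultrafilter.exists_le l
  let A : (G → ℝ) → ι → ℝ := fun f i => 𝔼 x ∈ F i, f x
  have hlim : ∀ f : G → ℝ, IsBounded (range f) → ∃ a, Tendsto (A f) U (𝓝 a) := fun f hf => by
    obtain ⟨C, hC⟩ := isBounded_iff_forall_norm_le.1 hf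
    refine U.exists_tendsto_of_abs_le (C := C) fun i => (Finset.abs_expect_le _ _).trans ?_
    exact Finset.expect_le (hF i) fun x _ => hC _ (mem_range_self x)
  have hm : ∀ f : G → ℝ, IsBounded (range f) →
      Tendsto (A f) U (𝓝 (limUnder (U : Filter ι) (A f))) :=
    fun f hf => tendsto_nhds_limUnder (hlim f hf)
  refine ⟨fun f => limUnder (U : Filter ι) (A f), fun f₁ f₂ h₁ h₂ => ?_, fun c f hf => ?_,
    fun f hf hf₀ => ?_, ?_, fun g f hf => ?_⟩
  · have hsum : IsBounded (range (f₁ + f₂)) := (h₁.add h₂).subset <|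
      range_subset_iff.2 fun x => add_mem_add (mem_range_self x) (mem_range_self x)
    refine tendsto_nhds_unique (hm _ hsum) ?_
    simpa only [A, Pi.add_apply, Finset.expect_add_distrib] using (hm _ h₁).add (hm _ h₂)
  · have hc : IsBounded (range (c • f)) := by
      obtain ⟨C, hC⟩ := isBounded_iff_forall_norm_le.1 hf
      refine isBounded_iff_forall_norm_le.2 ⟨‖c‖ * C, ?_⟩
      rintro _ ⟨x, rfl⟩
      rw [Pi.smul_apply, norm_smul]
      exact mul_le_mul_of_nonneg_left (hC _ (mem_range_self x)) (norm_nonneg c)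
    refine tendsto_nhds_unique (hm _ hc) ?_
    simpa only [A, Pi.smul_apply, smul_eq_mul, ← Finset.mul_expect] using (hm _ hf).const_mul c
  · exact ge_of_tendsto' (hm f hf) fun i => Finset.expect_nonneg fun x _ => hf₀ x
  · refine tendsto_nhds_unique (hm _ ?_) ?_
    · exact (isBounded_singleton (x := (1 : ℝ))).subset range_const_subset
    · simpa only [A, Finset.expect_const (hF _)] using tendsto_const_nhds
  · have hg : Tendsto (fun i => 𝔼 x ∈ F i, (f (g * x) - f x)) U (𝓝 0) :=
      (htop ▸ Subgroup.mem_top g : g ∈ asymptoticStabilizer l F) f hf |>.mono_left hU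
    have hshift := (hm _ hf).add hg
    simp only [A, Finset.expect_sub_distrib, add_sub_cancel, add_zero] at hshift
    exact tendsto_nhds_unique (hm _ (hf.subset (range_comp_subset_range _ _))) hshift

end Averages

def folnerSetInt (n : ℕ) : Finset (Multiplicative ℤ) :=
  (Finset.range (n + 1)).image fun j : ℕ => Multiplicative.ofAdd (j : ℤ)

theorem ofAdd_one_mem_asymptoticStabilizer :
    Multiplicative.ofAdd (1 : ℤ) ∈ asymptoticStabilizer atTop folnerSetInt := by
  intro f hf
  obtain ⟨C, hC⟩ := isBounded_iff_forall_norm_le.1 hf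
  set u : ℕ → ℝ := fun j => f (Multiplicative.ofAdd (j : ℤ))
  have hinj : Injective fun j : ℕ => Multiplicative.ofAdd (j : ℤ) :=
    Multiplicative.ofAdd.injective.comp Nat.cast_injective
  have htelescope : ∀ n : ℕ, 𝔼 x ∈ folnerSetInt n, (f (Multiplicative.ofAdd 1 * x) - f x) =
      (u (n + 1) - u 0) / (n + 1) := by
    intro n
    rw [folnerSetInt, Finset.expect_image hinj.injOn, Finset.expect_eq_sum_div_card,
      Finset.card_range, ← Finset.sum_range_sub u]
    push_cast
    simp [u, ← ofAdd_add, add_comm]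
  simp_rw [htelescope]
  refine squeeze_zero_norm (fun n => ?_)
    (by simpa using tendsto_one_div_add_atTop_nhds_zero_nat.const_mul (2 * C))
  have hu : ∀ j, |u j| ≤ C := fun j => hC _ (mem_range_self _)
  rw [Real.norm_eq_abs, abs_div, abs_of_pos (by positivity : (0 : ℝ) < n + 1), ← div_eq_mul_inv]
  gcongr
  linarith [abs_sub (u (n + 1)) (u 0), hu (n + 1), hu 0]

theorem isAmenable_multiplicative_int : IsAmenable (Multiplicative ℤ) := by
  refine isAmenable_of_asymptoticStabilizer_eq_top atTop folnerSetInt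
    (fun _ => Finset.nonempty_range_add_one.image _) (eq_top_iff.2 fun g _ => ?_)
  have := zpow_mem ofAdd_one_mem_asymptoticStabilizer (Multiplicative.toAdd g)
  rwa [← ofAdd_zsmul, smul_eq_mul, mul_one, ofAdd_toAdd] at this

theorem isAmenable_range_zpowersHom {G : Type*} [Group G] {g : G} (hg : ¬IsOfFinOrder g) :
    IsAmenable (zpowersHom G g).range := by
  have hinj : Injective (zpowersHom G g) :=
    (injective_zpow_iff_not_isOfFinOrder.2 hg).comp Multiplicative.toAdd.injective
  exact isAmenable_multiplicative_int.of_injective (MonoidHom.ofInjective hinj).symm.toMonoidHom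
    (MonoidHom.ofInjective hinj).symm.injective

theorem MaximalAmenable.ne_bot {G : Type*} [Group G] {H : Subgroup G} (hH : MaximalAmenable H)
    {g : G} (hg : ¬IsOfFinOrder g) : H ≠ ⊥ := by
  rintro rfl
  have hbot := hH.2 _ (isAmenable_range_zpowersHom hg) bot_le
  have hg₁ : g ∈ (⊥ : Subgroup G) := hbot ▸ ⟨Multiplicative.ofAdd 1, by simp⟩
  exact hg (Subgroup.mem_bot.1 hg₁ ▸ IsOfFinOrder.one)

theorem IsAmenable.exists_invariant_finitelyAdditive {G : Type*} [Group G] (hG : IsAmenable G) :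
    ∃ ν : Set G → ℝ, (∀ S T, Disjoint S T → ν (S ∪ T) = ν S + ν T) ∧
      (∀ S T, S ⊆ T → ν S ≤ ν T) ∧ ν univ = 1 ∧ ∀ (g : G) S, ν (g • S) = ν S := by
  obtain ⟨m, hadd, -, hpos, hone, hinv⟩ := hG
  let χ : Set G → G → ℝ := fun S => S.indicator fun _ => 1
  have hbdd : ∀ S, IsBounded (range (χ S)) := fun S => by
    refine (Metric.isBounded_Icc (0 : ℝ) 1).subset (range_subset_iff.2 fun x => ?_)
    by_cases hx : x ∈ S <;> simp [χ, hx]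
  have hunion : ∀ S T, Disjoint S T → m (χ (S ∪ T)) = m (χ S) + m (χ T) := fun S T hST => by
    rw [← hadd _ _ (hbdd S) (hbdd T)]
    exact congrArg m (indicator_union_of_disjoint hST _)
  refine ⟨fun S => m (χ S), hunion, fun S T hST => ?_, ?_, fun g S => ?_⟩
  · dsimp only
    rw [← union_sdiff_cancel hST, hunion _ _ disjoint_sdiff_right]
    exact le_add_of_nonneg_right (hpos _ (hbdd _) (indicator_nonneg fun _ _ => zero_le_one))
  · simpa only [χ, indicator_univ] using hone
  · have hsmul : χ (g • S) = fun x => χ S (g⁻¹ * x) := by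
      funext x
      by_cases hx : g⁻¹ * x ∈ S <;>
        simp [χ, indicator_of_mem, indicator_of_notMem, mem_smul_set_iff_inv_smul_mem, hx]
    dsimp only
    rw [← hinv g⁻¹ _ (hbdd S), hsmul]

theorem FreeGroup.startsWith_union_smul_startsWith {α : Type*} [DecidableEq α] (i : α) :
    startsWith (i, true) ∪ of i • startsWith (i, false) = univ := by
  refine eq_univ_of_forall fun g => or_iff_not_imp_left.2 fun hg => ?_
  rw [mem_smul_set_iff_inv_smul_mem, smul_eq_mul]
  exact startsWith_mk_mul (w := (i, false)) g hg

theorem FreeGroup.not_isAmenable {α : Type*} [Nontrivial α] : ¬IsAmenable (FreeGroup α) := by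
  classical
  intro hF
  obtain ⟨ν, hadd, hmono, huniv, hsmul⟩ := hF.exists_invariant_finitelyAdditive
  have hsub : ∀ S T, ν (S ∪ T) ≤ ν S + ν T := fun S T => by
    rw [← union_sdiff_self, hadd _ _ disjoint_sdiff_right]
    exact add_le_add le_rfl (hmono _ _ sdiff_subset)
  have hpair : ∀ i, 1 ≤ ν (startsWith (i, true)) + ν (startsWith (i, false)) := fun i => by
    simpa [startsWith_union_smul_startsWith, huniv, hsmul] using
      hsub (startsWith (i, true)) (of i • startsWith (i, false))
  obtain ⟨a, b, hab⟩ := exists_pair_ne α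
  have hdisj : ∀ x y : α × Bool, x ≠ y → Disjoint (startsWith x) (startsWith y) :=
    fun _ _ => startsWith.disjoint_iff_ne.mpr
  have hab_disj : Disjoint (startsWith (a, true) ∪ startsWith (a, false))
      (startsWith (b, true) ∪ startsWith (b, false)) :=
    .union_left (.union_right (hdisj _ _ (by simp [hab])) (hdisj _ _ (by simp [hab])))
      (.union_right (hdisj _ _ (by simp [hab])) (hdisj _ _ (by simp [hab])))
  have htotal := hmono _ univ (subset_univ
    ((startsWith (a, true) ∪ startsWith (a, false)) ∪
      (startsWith (b, true) ∪ startsWith (b, false))))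
  rw [hadd _ _ hab_disj, hadd _ _ (hdisj _ _ (by simp)), hadd _ _ (hdisj _ _ (by simp)),
    huniv] at htotal
  linarith [hpair a, hpair b]

theorem FreeGroup.injective_lift_unit_of_not_isOfFinOrder {M : Type*} [Group M] {a : M}
    (ha : ¬IsOfFinOrder a) : Injective (lift fun _ : Unit => a) := by
  refine (injective_iff_map_eq_one _).2 ?_
  rw [freeGroupUnitEquivInt.forall_congr_left]
  intro n hn
  change lift (fun _ => a) (of () ^ n) = 1 at hn
  rw [map_zpow, lift_apply_of] at hn
  have hn0 : n = 0 := injective_zpow_iff_not_isOfFinOrder.2 ha (hn.trans (zpow_zero a).symm)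
  simp [hn0, freeGroupUnitEquivInt]

namespace Monoid.CoprodI

variable {ι : Type*} {M : ι → Type*} [∀ i, Group (M i)]

theorem injective_lift_of_not_isOfFinOrder [Nontrivial ι] {a : ∀ i, M i}
    (ha : ∀ i, ¬IsOfFinOrder (a i)) : Injective (FreeGroup.lift fun i => of (a i)) := by
  classical
  have hfactor : FreeGroup.lift (fun i => of (a i)) =
      (lift fun i => of.comp (FreeGroup.lift fun _ => a i)).comp
        freeGroupEquivCoprodI.toMonoidHom := by
    ext i
    simp
  rw [hfactor, MonoidHom.coe_comp]
  refine Injective.comp ?_ freeGroupEquivCoprodI.injective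
  obtain ⟨i₀⟩ := (inferInstance : Nonempty ι)
  have hone : ∀ i, a i ≠ 1 := fun i h => ha i (h ▸ IsOfFinOrder.one)
  refine lift_injective_of_ping_pong _
    (Or.inr ⟨i₀, (Cardinal.natCast_lt_aleph0 (n := 3)).le.trans (Cardinal.aleph0_le_mk _)⟩)
    (fun i => {w : Word M | w.fstIdx = some i})
    (fun i => ⟨Word.cons (a i) Word.empty (by simp [Word.fstIdx, Word.empty]) (hone i),
      Word.fstIdx_cons ..⟩)
    (fun i j hij => disjoint_left.2 fun w hi hj => hij (Option.some_inj.1 (hi.symm.trans hj)))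
    (fun i j hij u hu => ?_)
  rintro _ ⟨w, hw, rfl⟩
  have hne : w.fstIdx ≠ some i := by
    rw [show w.fstIdx = some j from hw]
    exact fun h => hij (Option.some_inj.1 h).symm
  have hu' : FreeGroup.lift (fun _ => a i) u ≠ 1 :=
    ((FreeGroup.injective_lift_unit_of_not_isOfFinOrder (ha i)).ne_iff' (map_one _)).2 hu
  show (of (FreeGroup.lift (fun _ => a i) u) • w).fstIdx = some i
  rw [← Word.cons_eq_smul (h1 := hne) (h2 := hu')]
  exact Word.fstIdx_cons ..

end Monoid.CoprodI

namespace Monoid.Coprod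

universe u v

variable {M : Type u} {N : Type v} [Group M] [Group N]

-- `M` and `N` lifted to a common universe, so that they form a `Bool`-indexed family of groups.
abbrev Factor (M : Type u) (N : Type v) : Bool → Type max u v :=
  fun b => cond b (ULift.{u} N) (ULift.{v} M)

instance instGroupFactor : ∀ b, Group (Factor M N b)
  | false => inferInstanceAs (Group (ULift M))
  | true => inferInstanceAs (Group (ULift N))

def toCoprodI : M ∗ N →* CoprodI (Factor M N) :=
  lift ((CoprodI.of (i := false)).comp MulEquiv.ulift.symm.toMonoidHom)
    ((CoprodI.of (i := true)).comp MulEquiv.ulift.symm.toMonoidHom)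

theorem injective_lift_inl_inr_of_not_isOfFinOrder {a : M} {b : N} (ha : ¬IsOfFinOrder a)
    (hb : ¬IsOfFinOrder b) : Injective (FreeGroup.lift fun i : Bool => cond i (inr b) (inl a)) := by
  let c : ∀ i, Factor M N i := fun i => match i with
    | false => ULift.up a
    | true => ULift.up b
  have hc : ∀ i, ¬IsOfFinOrder (c i) := fun i => match i with
    | false => fun h => ha ((MulEquiv.ulift (α := M)).toMonoidHom.isOfFinOrder h)
    | true => fun h => hb ((MulEquiv.ulift (α := N)).toMonoidHom.isOfFinOrder h)
  have hcomp : toCoprodI.comp (FreeGroup.lift fun i : Bool => cond i (inr b) (inl a)) =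
      FreeGroup.lift fun i => CoprodI.of (c i) := by
    ext i
    cases i <;> rfl
  refine Injective.of_comp (f := toCoprodI) ?_
  rw [← MonoidHom.coe_comp, hcomp]
  exact CoprodI.injective_lift_of_not_isOfFinOrder hc

end Monoid.Coprod

theorem Subgroup.le_of_isAmenable_of_injective_coprod_lift {G : Type*} [Group G] {K : Subgroup G}
    (hfree : ∀ g : G, g ∉ K → Injective (Monoid.Coprod.lift K.subtype (zpowersHom G g)))
    {L : Subgroup G} (hL : IsAmenable L) {h : K} (hh : ¬IsOfFinOrder h) (hhL : (h : G) ∈ L) :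
    L ≤ K := by
  intro x hxL
  by_contra hxK
  have hint : ¬IsOfFinOrder (Multiplicative.ofAdd (1 : ℤ)) := by
    rw [isOfFinOrder_iff_eq_one]
    decide
  have hinj :=
    (hfree x hxK).comp (Monoid.Coprod.injective_lift_inl_inr_of_not_isOfFinOrder hh hint)
  have hcomp : (Monoid.Coprod.lift K.subtype (zpowersHom G x)).comp
      (FreeGroup.lift fun i : Bool => cond i (Monoid.Coprod.inr (Multiplicative.ofAdd 1))
        (Monoid.Coprod.inl h)) = FreeGroup.lift fun i => cond i x (h : G) :=
    FreeGroup.ext_hom _ _ fun i => by cases i <;> simp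
  rw [← MonoidHom.coe_comp, hcomp] at hinj
  refine FreeGroup.not_isAmenable (hL.of_injective_of_range_le hinj <|
    FreeGroup.range_lift_le <| range_subset_iff.2 fun i => ?_)
  cases i <;> assumption

theorem maximal_amenable_of_free_from_complement (G : Type*) [Group G]
    (hG : Monoid.IsTorsionFree G) (K : Subgroup G) (hKnt : K ≠ ⊥)
    (H : Subgroup K) (hH : MaximalAmenable H)
    (hfree : ∀ g : G, g ∉ K →
      Function.Injective
        (Monoid.Coprod.lift K.subtype (zpowersHom G g) :
          Monoid.Coprod K (Multiplicative ℤ) →* G)) :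
    MaximalAmenable (H.map K.subtype) := by
  have hK : ∀ k : K, k ≠ 1 → ¬IsOfFinOrder k := fun k hk hfin =>
    hG k (by simpa using hk) (Submonoid.isOfFinOrder_coe.2 hfin)
  obtain ⟨k, hk⟩ := Subgroup.ne_bot_iff_exists_ne_one.1 hKnt
  obtain ⟨h, hh⟩ := Subgroup.ne_bot_iff_exists_ne_one.1 (hH.ne_bot (hK k hk))
  let e := Subgroup.equivMapOfInjective H K.subtype K.subtype_injective
  refine ⟨hH.1.of_injective e.symm.toMonoidHom e.symm.injective, fun L hL hHL => ?_⟩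
  have hLK : L ≤ K := Subgroup.le_of_isAmenable_of_injective_coprod_lift hfree hL
    (hK h (by simpa using hh)) (hHL ⟨h, h.2, rfl⟩)
  have hcomap : L.comap K.subtype = H := hH.2 _
    (hL.of_injective_of_range_le (K.subtype_injective.comp Subtype.val_injective)
      (φ := K.subtype.comp (L.comap K.subtype).subtype) (by rintro _ ⟨x, rfl⟩; exact x.2))
    (Subgroup.map_le_iff_le_comap.1 hHL)
  rw [← hcomap, Subgroup.map_comap_eq_self (by rwa [K.range_subtype])]
end

section
/- Let m be an integer and n a positive integer, and let G = BS(m,n). In the complex group algebra ℂ[G] (the monoid algebra of G over ℂ), the element x = Σ_{k=0}^{n-1} δ_{a^k t a t^{-1} a^{-k}} (the sum of the basis elements indexed by the group elements a^k t a t^{-1} a^{-k} for 0 ≤ k ≤ n−1) commutes with the basis element δ_a; consequently x commutes with every element of the subalgebra generated by δ_a and δ_{a^{-1}}. -/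
/-! Conjugation by `δ_a` cyclically permutes the `n` summands `δ_{a^k (t a t⁻¹) a^{-k}}`, because
`a^n = t a^m t⁻¹` commutes with `t a t⁻¹`. Hence the sum commutes with the unit `δ_a`, so also with
`δ_a⁻¹ = δ_{a⁻¹}`, and therefore with everything in the algebra they generate. -/

@[to_additive]
theorem Finset.prod_range_succ_comp_eq_of_eq {M : Type*} [CommMonoid M] {f : ℕ → M} {n : ℕ}
    (h : f n = f 0) : ∏ k ∈ range n, f (k + 1) = ∏ k ∈ range n, f k := by
  cases n with
  | zero => rfl
  | succ j => rw [prod_range_succ, h, prod_range_succ']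

namespace MonoidAlgebra

variable {R G : Type*} [Semiring R] [Group G]

theorem commute_sum_of_conj_pow_of_commute_pow {a b : G} {n : ℕ} (h : Commute (a ^ n) b) :
    Commute (∑ k ∈ Finset.range n, of R G (a ^ k * b * (a ^ k)⁻¹)) (of R G a) := by
  set c : ℕ → G := fun k => a ^ k * b * (a ^ k)⁻¹
  have hc : c n = c 0 := by simp [c, h.eq]
  have hshift (k : ℕ) : a * c k = c (k + 1) * a := by simp only [c]; group
  calc (∑ k ∈ Finset.range n, of R G (c k)) * of R G a
      = ∑ k ∈ Finset.range n, of R G (c k) * of R G a := Finset.sum_mul _ _ _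
    _ = ∑ k ∈ Finset.range n, of R G (c (k + 1)) * of R G a :=
        (Finset.sum_range_succ_comp_eq_of_eq (f := fun k => of R G (c k) * of R G a)
          (by rw [hc])).symm
    _ = ∑ k ∈ Finset.range n, of R G a * of R G (c k) := by simp only [← map_mul, hshift]
    _ = of R G a * ∑ k ∈ Finset.range n, of R G (c k) := (Finset.mul_sum _ _ _).symm

theorem commute_of_inv_right {x : MonoidAlgebra R G} {g : G} (h : Commute x (of R G g)) :
    Commute x (of R G g⁻¹) :=
  Commute.units_inv_right (u := ⟨of R G g, of R G g⁻¹,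
    by rw [← map_mul, mul_inv_cancel, map_one], by rw [← map_mul, inv_mul_cancel, map_one]⟩) h

end MonoidAlgebra

namespace BS

theorem t_mul_a_zpow_mul_t_inv (m n : ℤ) : t m n * a m n ^ m * (t m n)⁻¹ = a m n ^ n := by
  have := PresentedGroup.one_of_mem (rels := bsRels m n) (Set.mem_singleton _)
  simpa [a, t, PresentedGroup.of, mul_inv_eq_one] using this

theorem commute_a_zpow_t_mul_a_mul_t_inv (m n : ℤ) :
    Commute (a m n ^ n) (t m n * a m n * (t m n)⁻¹) := by
  rw [← t_mul_a_zpow_mul_t_inv]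
  exact (Commute.zpow_self (a m n) m).conj (t m n)

end BS

theorem group_algebra_element_commutes_general (m : ℤ) (n : ℕ) :
    Commute
      (∑ k ∈ Finset.range n,
        MonoidAlgebra.of ℂ (BS m n)
          (BS.a m n ^ k * BS.t m n * BS.a m n * (BS.t m n)⁻¹ * (BS.a m n ^ k)⁻¹))
      (MonoidAlgebra.of ℂ (BS m n) (BS.a m n)) ∧
    ∀ y ∈ Algebra.adjoin ℂ
        ({MonoidAlgebra.of ℂ (BS m n) (BS.a m n),
          MonoidAlgebra.of ℂ (BS m n) (BS.a m n)⁻¹} : Set (MonoidAlgebra ℂ (BS m n))),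
      Commute
        (∑ k ∈ Finset.range n,
          MonoidAlgebra.of ℂ (BS m n)
            (BS.a m n ^ k * BS.t m n * BS.a m n * (BS.t m n)⁻¹ * (BS.a m n ^ k)⁻¹))
        y := by
  have hcomm : Commute (BS.a m n ^ n) (BS.t m n * BS.a m n * (BS.t m n)⁻¹) := by
    simpa using BS.commute_a_zpow_t_mul_a_mul_t_inv m n
  have ha := MonoidAlgebra.commute_sum_of_conj_pow_of_commute_pow (R := ℂ) hcomm
  simp only [← mul_assoc] at ha
  refine ⟨ha, fun y hy => Algebra.commute_of_mem_adjoin_of_forall_mem_commute hy ?_⟩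
  rintro z (rfl | rfl)
  · exact ha
  · exact MonoidAlgebra.commute_of_inv_right ha

theorem group_algebra_element_commutes (m : ℤ) (n : ℕ) (hn : 0 < n) :
    Commute
      (∑ k ∈ Finset.range n,
        MonoidAlgebra.of ℂ (BS m n)
          (BS.a m n ^ k * BS.t m n * BS.a m n * (BS.t m n)⁻¹ * (BS.a m n ^ k)⁻¹))
      (MonoidAlgebra.of ℂ (BS m n) (BS.a m n)) ∧
    ∀ y ∈ Algebra.adjoin ℂ
        ({MonoidAlgebra.of ℂ (BS m n) (BS.a m n),
          MonoidAlgebra.of ℂ (BS m n) (BS.a m n)⁻¹} : Set (MonoidAlgebra ℂ (BS m n))),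
      Commute
        (∑ k ∈ Finset.range n,
          MonoidAlgebra.of ℂ (BS m n)
            (BS.a m n ^ k * BS.t m n * BS.a m n * (BS.t m n)⁻¹ * (BS.a m n ^ k)⁻¹))
        y :=
  group_algebra_element_commutes_general m n
end

section
/- Let m and n be nonzero integers with |m| ≥ 2, and let G = BS(m,n). Then the element t a t^{-1} does not belong to the cyclic subgroup ⟨a⟩ generated by a. -/
/-!
Let `a` act on a commutative ring `R` as `x ↦ x + 1` and `t` as `x ↦ u x`, for a unit `u` with
`u m = n`. Then `t a t⁻¹` acts as `x ↦ x + u`, so `a ^ k = t a t⁻¹` forces `k = u` in `R`.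
Over `ℚ` this gives `k m = n`, so `m ∣ n`; then over `(ℤ/|m|)[T, T⁻¹]` we may take `u = T`,
which is not the image of an integer because `|m| ≥ 2`.
-/

namespace BS

variable {m n : ℤ} {R : Type*} [CommRing R]

def affineRep (u : Rˣ) (hu : (u : R) * m = n) : BS m n →* Equiv.Perm R :=
  PresentedGroup.toGroup (f := fun b => bif b then u.mulLeft else Equiv.addLeft 1) <| by
    rintro _ rfl
    ext x
    simp [mul_add, hu]

lemma affineRep_a (u : Rˣ) (hu : (u : R) * m = n) :
    affineRep u hu (BS.a m n) = Equiv.addLeft 1 :=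
  PresentedGroup.toGroup.of _

lemma affineRep_t (u : Rˣ) (hu : (u : R) * m = n) : affineRep u hu (BS.t m n) = u.mulLeft :=
  PresentedGroup.toGroup.of _

lemma intCast_eq_of_zpow_a_eq_conj (u : Rˣ) (hu : (u : R) * m = n) {k : ℤ}
    (hk : BS.a m n ^ k = BS.t m n * BS.a m n * (BS.t m n)⁻¹) : (k : R) = u := by
  simpa [affineRep_a, affineRep_t] using congrArg (affineRep u hu · 0) hk

lemma mul_eq_of_zpow_a_eq_conj (hm : m ≠ 0) (hn : n ≠ 0) {k : ℤ}
    (hk : BS.a m n ^ k = BS.t m n * BS.a m n * (BS.t m n)⁻¹) : k * m = n := by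
  have hm' : (m : ℚ) ≠ 0 := mod_cast hm
  have hk' := intCast_eq_of_zpow_a_eq_conj
    (Units.mk0 ((n : ℚ) / m) (div_ne_zero (mod_cast hn) hm')) (by simp [hm']) hk
  rw [Units.val_mk0, eq_div_iff hm'] at hk'
  exact mod_cast hk'

end BS

open LaurentPolynomial

lemma LaurentPolynomial.C_ne_T_one {R : Type*} [Semiring R] [Nontrivial R] (r : R) :
    C r ≠ T 1 := fun h => by
  simpa using congrArg (·.coeff 1) h

theorem tat_inv_not_in_cyclic (m n : ℤ) (hm0 : m ≠ 0) (hn0 : n ≠ 0) (hm : 2 ≤ |m|) :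
    BS.t m n * BS.a m n * (BS.t m n)⁻¹ ∉ Subgroup.zpowers (BS.a m n) := by
  rintro ⟨k, hk⟩
  have hkm := BS.mul_eq_of_zpow_a_eq_conj hm0 hn0 hk
  have : Fact (1 < m.natAbs) := ⟨by rw [Int.abs_eq_natAbs] at hm; omega⟩
  have hm_zero : (m : (ZMod m.natAbs)[T;T⁻¹]) = 0 := by
    rw [← map_intCast (C : ZMod m.natAbs →+* _),
      (ZMod.intCast_zmod_eq_zero_iff_dvd _ _).mpr Int.natAbs_dvd_self, map_zero]
  have hk_eq_T := BS.intCast_eq_of_zpow_a_eq_conj (R := (ZMod m.natAbs)[T;T⁻¹])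
    (isUnit_T 1).unit (by simp [← hkm, hm_zero]) hk
  exact C_ne_T_one (k : ZMod m.natAbs) (by simpa using hk_eq_T)
end

section
/- Let m and n be nonzero integers, let G = BS(m,n), let π be a mixing unitary representation of G on a complex Hilbert space 𝓗, and let c : G → 𝓗 be a 1-cocycle for π. If c(a) = 0, then c(t) = 0. -/
/-- A unitary representation `π` of `G` on a complex Hilbert space is mixing if all of its
matrix coefficients tend to `0` along the cofinite filter on `G`. -/
def IsMixingRep {G : Type*} [Group G] {𝓗 : Type*} [NormedAddCommGroup 𝓗]
    [InnerProductSpace ℂ 𝓗] (π : G →* (𝓗 ≃ₗᵢ[ℂ] 𝓗)) : Prop :=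
  ∀ ξ η : 𝓗, Filter.Tendsto (fun g : G => (inner ℂ (π g ξ) η : ℂ)) Filter.cofinite (nhds 0)

/-- `c : G → 𝓗` is a 1-cocycle for the representation `π`. -/
def IsCocycle {G : Type*} [Group G] {𝓗 : Type*} [NormedAddCommGroup 𝓗]
    [InnerProductSpace ℂ 𝓗] (π : G →* (𝓗 ≃ₗᵢ[ℂ] 𝓗)) (c : G → 𝓗) : Prop :=
  ∀ g h : G, c (g * h) = c g + π g (c h)

/-!
Since `c` vanishes on the powers of `a`, the cocycle identity applied to both sides of
`t a^m = a^n t` gives `c(t) = π(a^n) c(t)`. The element `a^n` has infinite order (it acts on `ℚ`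
by `x ↦ x + n` in the affine action `a ↦ x + 1`, `t ↦ (n/m) x`), so by mixing the constant
matrix coefficient `k ↦ ⟪π(a^{nk}) c(t), c(t)⟫ = ‖c(t)‖²` tends to `0`.
-/

lemma Equiv.not_isOfFinOrder_addRight {α : Type*} [AddGroup α] [IsAddTorsionFree α] {a : α}
    (ha : a ≠ 0) : ¬IsOfFinOrder (Equiv.addRight a) := by
  rw [← injective_zpow_iff_not_isOfFinOrder]
  intro k l hkl
  have hsmul : k • a = l • a := by
    simpa using congrArg (· 0) hkl
  exact injective_zsmul_iff_not_isOfFinAddOrder.2 (not_isOfFinAddOrder_of_isAddTorsionFree ha)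
    hsmul

namespace BS

lemma t_mul_a_zpow (m n : ℤ) : t m n * a m n ^ m = a m n ^ n * t m n := by
  have hrel : t m n * a m n ^ m * (t m n)⁻¹ * (a m n ^ n)⁻¹ = 1 :=
    PresentedGroup.one_of_mem (rels := bsRels m n) rfl
  rw [mul_inv_eq_one, mul_inv_eq_iff_eq_mul] at hrel
  exact hrel

variable {m n : ℤ}

def affineAction (hm : m ≠ 0) (hn : n ≠ 0) : BS m n →* Equiv.Perm ℚ :=
  PresentedGroup.toGroup
    (f := fun b => bif b then Equiv.mulLeft₀ ((n : ℚ) / m) (by simp [hm, hn]) else Equiv.addRight 1)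
    (by
      rintro _ rfl
      ext x
      simp
      field_simp
      ring)

lemma affineAction_a (hm : m ≠ 0) (hn : n ≠ 0) : affineAction hm hn (a m n) = Equiv.addRight 1 := by
  simp [affineAction, a]

lemma not_isOfFinOrder_a_zpow (hm : m ≠ 0) (hn : n ≠ 0) {k : ℤ} (hk : k ≠ 0) :
    ¬IsOfFinOrder (a m n ^ k) := by
  intro hfin
  have := (affineAction hm hn).isOfFinOrder hfin
  rw [map_zpow, affineAction_a, Equiv.zsmul_addRight] at this
  exact Equiv.not_isOfFinOrder_addRight (by simpa using hk) this

end BS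

section Representations

variable {G : Type*} [Group G] {𝓗 : Type*} [NormedAddCommGroup 𝓗] [InnerProductSpace ℂ 𝓗]
  {π : G →* (𝓗 ≃ₗᵢ[ℂ] 𝓗)}

lemma map_zpow_apply_eq_self_of_apply_eq_self {g : G} {ξ : 𝓗}
    (hξ : π g ξ = ξ) (k : ℤ) : π (g ^ k) ξ = ξ :=
  let fixing : Subgroup G :=
    { carrier := {g | π g ξ = ξ}
      one_mem' := by simp
      mul_mem' := fun {g h} hg hh => by simp_all
      inv_mem' := fun {g} hg => by simpa using congrArg (π g⁻¹) (Eq.symm hg) }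
  fixing.zpow_mem hξ k

lemma IsMixingRep.eq_zero_of_apply_eq_self (hπ : IsMixingRep π) {g : G} (hg : ¬IsOfFinOrder g)
    {ξ : 𝓗} (hξ : π g ξ = ξ) : ξ = 0 := by
  have hlim := (hπ ξ ξ).comp (injective_zpow_iff_not_isOfFinOrder.2 hg).tendsto_cofinite
  have hconst : (fun g : G => inner ℂ (π g ξ) ξ) ∘ (fun k : ℤ => g ^ k) = fun _ => inner ℂ ξ ξ :=
    funext fun k => by rw [Function.comp_apply, map_zpow_apply_eq_self_of_apply_eq_self hξ k]
  rw [hconst] at hlim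
  exact inner_self_eq_zero.1 (tendsto_nhds_unique tendsto_const_nhds hlim)

namespace IsCocycle

variable {c : G → 𝓗}

lemma map_one (hc : IsCocycle π c) : c 1 = 0 := by
  simpa using hc 1 1

def zeroSubgroup (hc : IsCocycle π c) : Subgroup G where
  carrier := {g | c g = 0}
  one_mem' := hc.map_one
  mul_mem' := fun {g h} hg hh => by simp_all [hc g h]
  inv_mem' := fun {g} hg => by
    have := hc g⁻¹ g
    rw [inv_mul_cancel, hc.map_one, hg, map_zero, add_zero] at this
    exact this.symm

lemma map_zpow_eq_zero (hc : IsCocycle π c) {g : G} (hg : c g = 0) (k : ℤ) : c (g ^ k) = 0 :=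
  hc.zeroSubgroup.zpow_mem hg k

lemma apply_eq_self_of_mul_eq (hc : IsCocycle π c) {g x y : G} (hgxy : g * x = y * g)
    (hx : c x = 0) (hy : c y = 0) : π y (c g) = c g := by
  have h := hc g x
  rw [hgxy, hc y g, hx, hy, map_zero] at h
  simpa using h

end IsCocycle

end Representations

theorem cocycle_vanishes_on_t_general (m n : ℤ) (hm : m ≠ 0) (hn : n ≠ 0)
    (𝓗 : Type*) [NormedAddCommGroup 𝓗] [InnerProductSpace ℂ 𝓗]
    (π : BS m n →* (𝓗 ≃ₗᵢ[ℂ] 𝓗)) (hπ : IsMixingRep π)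
    (c : BS m n → 𝓗) (hc : IsCocycle π c) (ha : c (BS.a m n) = 0) :
    c (BS.t m n) = 0 := by
  have hfix : π (BS.a m n ^ n) (c (BS.t m n)) = c (BS.t m n) :=
    hc.apply_eq_self_of_mul_eq (BS.t_mul_a_zpow m n) (hc.map_zpow_eq_zero ha m)
      (hc.map_zpow_eq_zero ha n)
  exact hπ.eq_zero_of_apply_eq_self (BS.not_isOfFinOrder_a_zpow hm hn hn) hfix

theorem cocycle_vanishes_on_t (m n : ℤ) (hm : m ≠ 0) (hn : n ≠ 0)
    (𝓗 : Type*) [NormedAddCommGroup 𝓗] [InnerProductSpace ℂ 𝓗] [CompleteSpace 𝓗]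
    (π : BS m n →* (𝓗 ≃ₗᵢ[ℂ] 𝓗)) (hπ : IsMixingRep π)
    (c : BS m n → 𝓗) (hc : IsCocycle π c) (ha : c (BS.a m n) = 0) :
    c (BS.t m n) = 0 :=
  cocycle_vanishes_on_t_general m n hm hn 𝓗 π hπ c hc ha
end
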